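/- The least model of a propositional Horn theory is computed by the omega operation: for every theory P over A, LM(P) = P^ω, where LM(P) is the least subset I ⊆ A (with respect to inclusion) satisfying T_P(I) ⊆ I. -/
import Mathlib


/-- A propositional Horn theory over atoms `A`: a finite set of rules `(head, body)`. -/
abbrev Theory (A : Type*) := Finset (A × Finset A)

variable {A : Type*} [Fintype A] [DecidableEq A]

/-- Heads of a (sub)theory. -/
def heads (S : Theory A) : Finset A := S.image Prod.fst

/-- Body atoms of a (sub)theory. -/
def bodies (S : Theory A) : Finset A := S.biUnion Prod.snd

/-- Sequential composition of propositional Horn theories. -/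
def comp (P R : Theory A) : Theory A :=
  P.biUnion fun r =>
    (R.powerset.filter fun S => S.card = r.2.card ∧ heads S = r.2).image
      fun S => (r.1, bodies S)

/-- The unit theory `1_A = {a ← a | a ∈ A}`. -/
def unitTheory (A : Type*) [Fintype A] [DecidableEq A] : Theory A :=
  Finset.univ.image fun a => (a, ({a} : Finset A))

/-- The theory associated with an interpretation `I ⊆ A`. -/
def interp (I : Finset A) : Theory A := I.image fun a => (a, (∅ : Finset A))

/-- The van Emden–Kowalski operator. -/
def vek (P : Theory A) (I : Finset A) : Finset A :=
  (P.filter fun r => r.2 ⊆ I).image Prod.fst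

/-- The facts (rules with empty body) of a theory. -/
def facts (P : Theory A) : Theory A := P.filter fun r => r.2 = ∅

/-- The proper rules (rules with nonempty body) of a theory. -/
def proper (P : Theory A) : Theory A := P.filter fun r => r.2 ≠ ∅

/-- The left reduct `^I P`. -/
def leftReduct (I : Finset A) (P : Theory A) : Theory A := P.filter fun r => r.1 ∈ I

/-- The right reduct `P^I`. -/
def rightReduct (P : Theory A) (I : Finset A) : Theory A := P.filter fun r => r.2 ⊆ I

/-- The restricted unit theory `1^I = {a ← a | a ∈ I}`. -/
def unitOn (I : Finset A) : Theory A := I.image fun a => (a, ({a} : Finset A))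

/-- The closure `cl_B(P) = {b ← b | b ∈ B} ∪ P`. -/
def cl (B : Finset A) (P : Theory A) : Theory A :=
  (B.image fun b => (b, ({b} : Finset A))) ∪ P

/-- Powers of a theory: `P^0 = 1_A`, `P^{n+1} = P ∘ P^n`. -/
def power (P : Theory A) : ℕ → Theory A
  | 0 => unitTheory A
  | n + 1 => comp P (power P n)

/-- The Kleene star `P^* = ⋃_{n ≥ 0} P^n`. -/
noncomputable def star (P : Theory A) : Theory A :=
  @Finset.filter _ (fun r => ∃ n, r ∈ power P n) (Classical.decPred _)
    Finset.univ

/-- The plus operation `P^+ = P^* ∘ P`. -/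
noncomputable def plus (P : Theory A) : Theory A := comp (star P) P

/-- The omega operation `P^ω = {a ∈ A | (a ← ) ∈ P^+}`. -/
noncomputable def omega (P : Theory A) : Finset A :=
  ((plus P).filter fun r => r.2 = ∅).image Prod.fst

/-- Iteration of the van Emden–Kowalski operator starting from `∅`. -/
def iterVek (P : Theory A) : ℕ → Finset A
  | 0 => ∅
  | n + 1 => vek P (iterVek P n)

lemma vek_mono (P : Theory A) {I J : Finset A} (h : I ⊆ J) : vek P I ⊆ vek P J := by
  intro a ha
  simp only [vek, Finset.mem_image, Finset.mem_filter] at *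
  obtain ⟨r, ⟨hr, hsub⟩, rfl⟩ := ha
  exact ⟨r, ⟨hr, hsub.trans h⟩, rfl⟩

lemma mem_vek {P : Theory A} {I : Finset A} {a : A} :
    a ∈ vek P I ↔ ∃ r ∈ P, r.2 ⊆ I ∧ r.1 = a := by
  simp only [vek, Finset.mem_image, Finset.mem_filter]
  constructor
  · rintro ⟨r, ⟨hr, hs⟩, rfl⟩; exact ⟨r, hr, hs, rfl⟩
  · rintro ⟨r, hr, hs, rfl⟩; exact ⟨r, ⟨hr, hs⟩, rfl⟩

lemma iterVek_mono_succ (P : Theory A) : ∀ n, iterVek P n ⊆ iterVek P (n + 1)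
  | 0 => by simp [iterVek]
  | n + 1 => vek_mono P (iterVek_mono_succ P n)

lemma iterVek_mono (P : Theory A) {m n : ℕ} (h : m ≤ n) : iterVek P m ⊆ iterVek P n := by
  induction n, h using Nat.le_induction with
  | base => exact Finset.Subset.refl _
  | succ n h ih => exact ih.trans (iterVek_mono_succ P n)

lemma mem_comp {P R : Theory A} {a : A} {B : Finset A} :
    (a, B) ∈ comp P R ↔
      ∃ r ∈ P, ∃ S, S ⊆ R ∧ S.card = r.2.card ∧ heads S = r.2 ∧ a = r.1 ∧ B = bodies S := by
  simp only [comp, Finset.mem_biUnion, Finset.mem_image, Finset.mem_filter,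
    Finset.mem_powerset, Prod.mk.injEq]
  constructor
  · rintro ⟨r, hr, S, ⟨hSR, hcard, hheads⟩, ha, hB⟩
    exact ⟨r, hr, S, hSR, hcard, hheads, ha.symm, hB.symm⟩
  · rintro ⟨r, hr, S, hSR, hcard, hheads, ha, hB⟩
    exact ⟨r, hr, S, ⟨hSR, hcard, hheads⟩, ha.symm, hB.symm⟩

lemma mem_star {P : Theory A} {r : A × Finset A} : r ∈ star P ↔ ∃ n, r ∈ power P n := by
  simp [_root_.star]

lemma mem_power_empty {P : Theory A} :
    ∀ n (a : A), (a, (∅ : Finset A)) ∈ power P n ↔ a ∈ iterVek P n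
  | 0, a => by
    simp [power, unitTheory, iterVek, eq_comm (a := (∅ : Finset A)),
      Finset.singleton_ne_empty]
  | n + 1, a => by
    rw [power, mem_comp]
    constructor
    · rintro ⟨r, hr, S, hSR, hcard, hheads, rfl, hB⟩
      have hb : ∀ s ∈ S, s.2 = (∅ : Finset A) := by
        intro s hs
        exact Finset.subset_empty.mp (hB ▸ Finset.subset_biUnion_of_mem Prod.snd hs)
      rw [iterVek]
      refine mem_vek.mpr ⟨r, hr, ?_, rfl⟩
      intro b hb'
      rw [← hheads] at hb'
      simp only [heads, Finset.mem_image] at hb'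
      obtain ⟨⟨s1, s2⟩, hs, rfl⟩ := hb'
      have h2 : s2 = ∅ := hb _ hs
      subst h2
      exact (mem_power_empty n s1).mp (hSR hs)
    · intro ha
      rw [iterVek] at ha
      obtain ⟨r, hr, hsub, rfl⟩ := mem_vek.mp ha
      refine ⟨r, hr, r.2.image fun b => (b, (∅ : Finset A)), ?_, ?_, ?_, rfl, ?_⟩
      · intro s hs
        simp only [Finset.mem_image] at hs
        obtain ⟨b, hb, rfl⟩ := hs
        exact (mem_power_empty n b).mpr (hsub hb)
      · exact Finset.card_image_of_injective _ fun x y h => by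
          simpa using congrArg Prod.fst h
      · ext b; simp [heads, Finset.image_image]
      · symm
        rw [← Finset.subset_empty, bodies]
        refine Finset.biUnion_subset.mpr fun x hx => ?_
        simp only [Finset.mem_image] at hx
        obtain ⟨b, _, rfl⟩ := hx
        exact Finset.Subset.refl _

lemma power_body_subset {P : Theory A} :
    ∀ m k (a : A) (B : Finset A), (a, B) ∈ power P m → B ⊆ iterVek P k →
      a ∈ iterVek P (m + k)
  | 0, k, a, B => by
    intro h hB
    simp only [power, unitTheory, Finset.mem_image, Prod.mk.injEq] at h
    obtain ⟨b, _, rfl, rfl⟩ := h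
    simpa using hB (Finset.mem_singleton_self _)
  | m + 1, k, a, B => by
    intro h hB
    rw [power, mem_comp] at h
    obtain ⟨r, hr, S, hSR, hcard, hheads, rfl, rfl⟩ := h
    have hstep : r.2 ⊆ iterVek P (m + k) := by
      intro b hb
      rw [← hheads] at hb
      simp only [heads, Finset.mem_image] at hb
      obtain ⟨s, hs, rfl⟩ := hb
      have hmem : (s.1, s.2) ∈ power P m := by rw [Prod.mk.eta]; exact hSR hs
      exact power_body_subset m k s.1 s.2 hmem
        ((Finset.subset_biUnion_of_mem Prod.snd hs).trans hB)
    have : r.1 ∈ iterVek P (m + k + 1) := by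
      rw [iterVek]
      exact mem_vek.mpr ⟨r, hr, hstep, rfl⟩
    simpa [Nat.add_right_comm] using this

lemma mem_omega_iff {P : Theory A} {a : A} : a ∈ omega P ↔ ∃ n, a ∈ iterVek P n := by
  have hplus : a ∈ omega P ↔ (a, (∅ : Finset A)) ∈ plus P := by
    simp only [omega, Finset.mem_image, Finset.mem_filter]
    constructor
    · rintro ⟨⟨r1, r2⟩, ⟨hr, h2⟩, h1⟩
      simp only at h1 h2
      subst h1; subst h2; exact hr
    · intro h; exact ⟨(a, ∅), ⟨h, rfl⟩, rfl⟩
  rw [hplus, plus, mem_comp]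
  constructor
  · rintro ⟨r, hr, S, hSP, hcard, hheads, rfl, hB⟩
    obtain ⟨m, hm⟩ := mem_star.mp hr
    have hsub : r.2 ⊆ iterVek P 1 := by
      intro b hb
      rw [← hheads] at hb
      simp only [heads, Finset.mem_image] at hb
      obtain ⟨s, hs, rfl⟩ := hb
      have hs2 : s.2 = (∅ : Finset A) :=
        Finset.subset_empty.mp (hB ▸ Finset.subset_biUnion_of_mem Prod.snd hs)
      show s.1 ∈ iterVek P 1
      rw [iterVek]
      exact mem_vek.mpr ⟨s, hSP hs, by simp [hs2, iterVek], rfl⟩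
    have hmem : (r.1, r.2) ∈ power P m := by rw [Prod.mk.eta]; exact hm
    exact ⟨m + 1, power_body_subset m 1 r.1 r.2 hmem hsub⟩
  · rintro ⟨n, hn⟩
    refine ⟨(a, ∅), mem_star.mpr ⟨n, (mem_power_empty n a).mpr hn⟩,
      ∅, Finset.empty_subset _, by simp, by simp [heads], rfl, by simp [bodies]⟩

lemma exists_iterVek_bound (P : Theory A) (s : Finset A)
    (h : ∀ b ∈ s, ∃ n, b ∈ iterVek P n) : ∃ N, s ⊆ iterVek P N := by
  classical
  induction s using Finset.induction with
  | empty => exact ⟨0, by simp⟩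
  | @insert b s hb ih =>
    obtain ⟨N, hN⟩ := ih fun c hc => h c (Finset.mem_insert_of_mem hc)
    obtain ⟨M, hM⟩ := h b (Finset.mem_insert_self _ _)
    exact ⟨max N M, Finset.insert_subset (iterVek_mono P (le_max_right _ _) hM)
      (hN.trans (iterVek_mono P (le_max_left _ _)))⟩

/-- The least model of a propositional Horn theory (the least interpretation
`I` with `T_P(I) ⊆ I`) is computed by the omega operation: `LM(P) = P^ω`. -/
theorem leastModel_eq_omega (P : Theory A) :
    IsLeast {I : Finset A | vek P I ⊆ I} (omega P) := by
  constructor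
  · -- omega P is a model
    intro a ha
    obtain ⟨r, hr, hsub, rfl⟩ := mem_vek.mp ha
    obtain ⟨N, hN⟩ := exists_iterVek_bound P r.2 fun b hb => mem_omega_iff.mp (hsub hb)
    refine mem_omega_iff.mpr ⟨N + 1, ?_⟩
    rw [iterVek]
    exact mem_vek.mpr ⟨r, hr, hN, rfl⟩
  · -- omega P is below every model
    intro I hI a ha
    obtain ⟨n, hn⟩ := mem_omega_iff.mp ha
    have : ∀ m, iterVek P m ⊆ I := by
      intro m
      induction m with
      | zero => simp [iterVek]
      | succ m ih => exact (vek_mono P ih).trans hI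
    exact this n hn
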